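/- arXiv:2410.15481 — 2 statements merged into one kernel-verified Lean document; each statement's English description precedes it below -/
import Mathlib

section
/- Let K: ℝ → ℂ be integrable, let [a₁, b₁] and [a₂, b₂] be compact intervals, and let f: ℝ² → ℂ be continuous, bounded by φ₀, with partial derivatives bounded by φ₁. Define F(s) = ∫_{a₂}^{b₂} f(s + s', s') · 1_{[a₁, b₁]}(s' + s) ds'. Then F is continuous, |F(s)| ≤ φ₀(b₂ − a₂) for all s, and F is differentiable at every s ∉ {a₁ − a₂, a₁ − b₂, b₁ − a₂, b₁ − b₂} with |F'(s)| ≤ φ₁(b₂ − a₂) + 2φ₀ there. -/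
/-!
Substituting `u = s + s'` turns `F s` into `∫ u in x s..y s, f (u, u - s)` with clamped endpoints
`x s = max a₁ (min b₁ (a₂ + s))` and `y s = max a₁ (min b₁ (b₂ + s))`, so that the indicator
disappears. Away from the four breakpoints both endpoints are locally affine with slope `0` or `1`,
and the Leibniz rule for a moving interval gives `F'(s)` as two boundary terms, each bounded by
`φ₀`, plus the integral of `-∂₂f` over an interval of length at most `b₂ - a₂`.
-/

open MeasureTheory Filter Set Topology Asymptotics

theorem abs_max_min_sub_max_min_le (a b x y : ℝ) :
    |max a (min b x) - max a (min b y)| ≤ |x - y| := by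
  refine (abs_max_sub_max_le_max _ _ _ _).trans ?_
  simp only [sub_self, abs_zero]
  exact max_le (abs_nonneg _) ((abs_min_sub_min_le_max _ _ _ _).trans (by simp))

theorem exists_hasDerivAt_max_min {a b x : ℝ} (hxa : x ≠ a) (hxb : x ≠ b) :
    ∃ c, |c| ≤ 1 ∧ HasDerivAt (fun y => max a (min b y)) c x := by
  rcases hxa.lt_or_gt with hlt | hgt
  · refine ⟨0, by simp, (hasDerivAt_const x a).congr_of_eventuallyEq ?_⟩
    filter_upwards [eventually_lt_nhds hlt] with y hy
    exact max_eq_left ((min_le_right b y).trans hy.le)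
  rcases hxb.lt_or_gt with hlt' | hgt'
  · refine ⟨1, by simp, (hasDerivAt_id x).congr_of_eventuallyEq ?_⟩
    filter_upwards [eventually_gt_nhds hgt, eventually_lt_nhds hlt'] with y hya hyb
    simp [min_eq_right hyb.le, max_eq_right hya.le]
  · refine ⟨0, by simp, (hasDerivAt_const x (max a b)).congr_of_eventuallyEq ?_⟩
    filter_upwards [eventually_gt_nhds hgt'] with y hy
    rw [min_eq_left hy.le]

theorem Ioc_max_min_eq_Ioc_inter_Ioc (a b p q : ℝ) :
    Ioc (max a (min b p)) (max a (min b q)) = Ioc p q ∩ Ioc a b := by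
  ext u
  simp only [mem_Ioc, mem_inter_iff, max_lt_iff, le_max_iff, min_lt_iff, le_min_iff]
  grind

section

variable {E : Type*} [NormedAddCommGroup E] [NormedSpace ℝ E]

theorem intervalIntegral_indicator_Icc (g : ℝ → E) (a b p q : ℝ) :
    ∫ u in p..q, (Icc a b).indicator g u = ∫ u in max a (min b p)..max a (min b q), g u := by
  wlog hpq : p ≤ q generalizing p q
  · rw [intervalIntegral.integral_symm, this q p (le_of_not_ge hpq),
      intervalIntegral.integral_symm, neg_neg]
  rw [intervalIntegral.integral_of_le hpq, intervalIntegral.integral_of_le (by gcongr),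
    setIntegral_indicator measurableSet_Icc, Ioc_max_min_eq_Ioc_inter_Ioc]
  exact setIntegral_congr_set (ae_eq_set_inter EventuallyEq.rfl Ioc_ae_eq_Icc.symm)

theorem continuous_intervalIntegral_of_continuous_bounds {X : Type*} [TopologicalSpace X]
    {g : X → ℝ → E} {x y : X → ℝ} (hg : Continuous (Function.uncurry g)) (hx : Continuous x)
    (hy : Continuous y) : Continuous fun t => ∫ u in x t..y t, g t u := by
  have hint : ∀ t a b, IntervalIntegrable (g t) volume a b :=
    fun t a b => (hg.uncurry_left t).intervalIntegrable a b
  have hsplit : (fun t => ∫ u in x t..y t, g t u) =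
      fun t => (∫ u in 0..y t, g t u) - ∫ u in 0..x t, g t u :=
    funext fun t => (intervalIntegral.integral_interval_sub_left (hint t _ _) (hint t _ _)).symm
  rw [hsplit]
  fun_prop

theorem hasDerivAt_integral_of_norm_le_mul_abs {h : ℝ → ℝ → E} {z : ℝ → ℝ} {s C : ℝ}
    (hh : ∀ t u, ‖h t u‖ ≤ C * |t - s|) (hz : ContinuousAt z s) :
    HasDerivAt (fun t => ∫ u in z t..z s, h t u) 0 s := by
  rw [hasDerivAt_iff_isLittleO]
  simp only [intervalIntegral.integral_same, sub_zero, smul_zero]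
  have hsmall : (fun t => z t - z s) =o[𝓝 s] (fun _ => (1 : ℝ)) :=
    (isLittleO_one_iff ℝ).2 (tendsto_sub_nhds_zero_iff.2 hz)
  have hquad : (fun t => (t - s) * (z t - z s)) =o[𝓝 s] fun t => t - s := by
    simpa using (isBigO_refl (fun t => t - s) (𝓝 s)).mul_isLittleO hsmall
  refine IsBigO.trans_isLittleO (IsBigO.of_bound C (Eventually.of_forall fun t => ?_)) hquad
  calc ‖∫ u in z t..z s, h t u‖ ≤ C * |t - s| * |z s - z t| :=
        intervalIntegral.norm_integral_le_of_norm_le_const fun u _ => hh t u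
    _ = C * ‖(t - s) * (z t - z s)‖ := by
        rw [norm_mul, Real.norm_eq_abs, Real.norm_eq_abs, abs_sub_comm (z s), mul_assoc]

theorem hasDerivAt_intervalIntegral_of_hasDerivAt_bounds [CompleteSpace E]
    {g g' : ℝ → ℝ → E} {x y : ℝ → ℝ} {x' y' C s : ℝ}
    (hg : ∀ t, Continuous (g t)) (hg' : Continuous (g' s))
    (hderiv : ∀ t u, HasDerivAt (fun t => g t u) (g' t u) t) (hbound : ∀ t u, ‖g' t u‖ ≤ C)
    (hx : HasDerivAt x x' s) (hy : HasDerivAt y y' s) :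
    HasDerivAt (fun t => ∫ u in x t..y t, g t u)
      (y' • g s (y s) - x' • g s (x s) + ∫ u in x s..y s, g' s u) s := by
  have hint : ∀ t a b, IntervalIntegrable (g t) volume a b :=
    fun t a b => (hg t).intervalIntegrable a b
  have hlip : ∀ t u, ‖g t u - g s u‖ ≤ C * |t - s| := fun t u => by
    simpa [Real.norm_eq_abs] using convex_univ.norm_image_sub_le_of_norm_hasDerivWithin_le
      (fun r _ => (hderiv r u).hasDerivWithinAt) (fun r _ => hbound r u) (mem_univ s)
      (mem_univ t)
  have hbounds : HasDerivAt (fun t => ∫ u in x t..y t, g s u)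
      (y' • g s (y s) - x' • g s (x s)) s := by
    exact (intervalIntegral.integral_hasFDerivAt (hint s (x s) (y s))
      ((hg s).stronglyMeasurableAtFilter _ _) ((hg s).stronglyMeasurableAtFilter _ _)
      (hg s).continuousAt (hg s).continuousAt).comp_hasDerivAt s (hx.prodMk hy)
  have hparam : HasDerivAt (fun t => ∫ u in x s..y s, g t u) (∫ u in x s..y s, g' s u) s :=
    (intervalIntegral.hasDerivAt_integral_of_dominated_loc_of_deriv_le (bound := fun _ => C)
      univ_mem (Eventually.of_forall fun t => (hg t).aestronglyMeasurable) (hint s _ _)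
      hg'.aestronglyMeasurable (Eventually.of_forall fun u _ t _ => hbound t u)
      intervalIntegrable_const (Eventually.of_forall fun u _ t _ => hderiv t u)).2
  -- the last two integrals are `O(|t - s|)` integrands over intervals that shrink as `t → s`
  have hsplit : ∀ t, ∫ u in x t..y t, g t u = (∫ u in x t..y t, g s u) +
      ((∫ u in x s..y s, g t u) - ∫ u in x s..y s, g s u) +
      ((∫ u in x t..x s, g t u - g s u) - ∫ u in y t..y s, g t u - g s u) := fun t => by
    have hdiff : ∀ a b, IntervalIntegrable (fun u => g t u - g s u) volume a b :=
      fun a b => (hint t a b).sub (hint s a b)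
    rw [← intervalIntegral.integral_interval_sub_interval_comm (hdiff _ _) (hdiff _ _) (hdiff _ _),
      intervalIntegral.integral_sub (hint t _ _) (hint s _ _),
      intervalIntegral.integral_sub (hint t _ _) (hint s _ _)]
    abel
  rw [funext hsplit]
  exact ((hbounds.add (hparam.sub_const (∫ u in x s..y s, g s u))).add
    ((hasDerivAt_integral_of_norm_le_mul_abs hlip hx.continuousAt).sub
      (hasDerivAt_integral_of_norm_le_mul_abs hlip hy.continuousAt))).congr_deriv
    (by rw [sub_zero, add_zero])

theorem norm_smul_sub_smul_add_integral_le {g g' : ℝ → E} {a b x' y' M C : ℝ}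
    (hx' : |x'| ≤ 1) (hy' : |y'| ≤ 1) (hg : ∀ u, ‖g u‖ ≤ M) (hg' : ∀ u, ‖g' u‖ ≤ C) :
    ‖y' • g b - x' • g a + ∫ u in a..b, g' u‖ ≤ C * |b - a| + 2 * M := by
  have hM : 0 ≤ M := (norm_nonneg _).trans (hg 0)
  calc _ ≤ |y'| * ‖g b‖ + |x'| * ‖g a‖ + C * |b - a| := by
        refine (norm_add_le _ _).trans (add_le_add ((norm_sub_le _ _).trans_eq ?_) ?_)
        · rw [norm_smul, norm_smul, Real.norm_eq_abs, Real.norm_eq_abs]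
        · exact intervalIntegral.norm_integral_le_of_norm_le_const fun u _ => hg' u
    _ ≤ 1 * M + 1 * M + C * |b - a| := by gcongr <;> exact hg _
    _ = C * |b - a| + 2 * M := by ring

end

theorem hasDerivAt_apply_mk_sub {f : ℝ × ℝ → ℂ} (hf : ContDiff ℝ 1 f) (u t : ℝ) :
    HasDerivAt (fun t => f (u, u - t)) (-fderiv ℝ f (u, u - t) (0, 1)) t := by
  have hline : HasDerivAt (fun t : ℝ => (u, u - t)) (-(0, 1) : ℝ × ℝ) t := by
    simpa using (hasDerivAt_const t u).prodMk ((hasDerivAt_id t).const_sub u)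
  exact ((hf.differentiable one_ne_zero (u, u - t)).hasFDerivAt.comp_hasDerivAt t hline).congr_deriv
    (map_neg _ _)

theorem integral_mul_indicator_Icc_eq (f : ℝ × ℝ → ℂ) (a₁ b₁ a₂ b₂ s : ℝ) :
    ∫ s' in a₂..b₂, f (s + s', s') * (Icc a₁ b₁).indicator 1 (s' + s) =
      ∫ u in max a₁ (min b₁ (a₂ + s))..max a₁ (min b₁ (b₂ + s)), f (u, u - s) := by
  have hshift : ∀ s', f (s + s', s') * (Icc a₁ b₁).indicator 1 (s' + s) =
      (Icc a₁ b₁).indicator (fun u => f (u, u - s)) (s' + s) := fun s' => by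
    by_cases h : s' + s ∈ Icc a₁ b₁ <;> simp [h, add_comm s s']
  simp only [hshift]
  rw [intervalIntegral.integral_comp_add_right (fun u => (Icc a₁ b₁).indicator _ u),
    intervalIntegral_indicator_Icc]

theorem stmt4_general (f : ℝ × ℝ → ℂ) (hf : ContDiff ℝ 1 f) (φ₀ φ₁ : ℝ)
    (hb : ∀ p, ‖f p‖ ≤ φ₀)
    (hd2 : ∀ p, ‖fderiv ℝ f p (0, 1)‖ ≤ φ₁)
    (a₁ b₁ a₂ b₂ : ℝ) (h2 : a₂ ≤ b₂)
    (F : ℝ → ℂ)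
    (hF : ∀ s, F s = ∫ s' in a₂..b₂,
        f (s + s', s') * Set.indicator (Set.Icc a₁ b₁) 1 (s' + s)) :
    Continuous F ∧ (∀ s, ‖F s‖ ≤ φ₀ * (b₂ - a₂)) ∧
    ∀ s, s ∉ ({a₁ - a₂, a₁ - b₂, b₁ - a₂, b₁ - b₂} : Set ℝ) →
      ∃ F's, HasDerivAt F F's s ∧ ‖F's‖ ≤ φ₁ * (b₂ - a₂) + 2 * φ₀ := by
  set x : ℝ → ℝ := fun t => max a₁ (min b₁ (a₂ + t))
  set y : ℝ → ℝ := fun t => max a₁ (min b₁ (b₂ + t))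
  have hFxy : F = fun t => ∫ u in x t..y t, f (u, u - t) :=
    funext fun t => (hF t).trans (integral_mul_indicator_Icc_eq f a₁ b₁ a₂ b₂ t)
  have hlen : ∀ t, |y t - x t| ≤ b₂ - a₂ := fun t => by
    simpa [abs_of_nonneg (sub_nonneg.2 h2)] using
      abs_max_min_sub_max_min_le a₁ b₁ (b₂ + t) (a₂ + t)
  have hfc : Continuous f := hf.continuous
  refine ⟨?_, fun t => ?_, fun s hs => ?_⟩
  · rw [hFxy]
    exact continuous_intervalIntegral_of_continuous_bounds (by fun_prop) (by fun_prop)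
      (by fun_prop)
  · rw [hFxy]
    calc ‖∫ u in x t..y t, f (u, u - t)‖ ≤ φ₀ * |y t - x t| :=
          intervalIntegral.norm_integral_le_of_norm_le_const fun u _ => hb _
      _ ≤ φ₀ * (b₂ - a₂) := mul_le_mul_of_nonneg_left (hlen t) ((norm_nonneg _).trans (hb 0))
  simp only [mem_insert_iff, mem_singleton_iff, not_or] at hs
  obtain ⟨x', hx', hx⟩ := exists_hasDerivAt_max_min (a := a₁) (b := b₁) (x := a₂ + s)
    (fun h => hs.1 (by linarith)) (fun h => hs.2.2.1 (by linarith))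
  obtain ⟨y', hy', hy⟩ := exists_hasDerivAt_max_min (a := a₁) (b := b₁) (x := b₂ + s)
    (fun h => hs.2.1 (by linarith)) (fun h => hs.2.2.2 (by linarith))
  have hderiv_le : ∀ t u, ‖-fderiv ℝ f (u, u - t) (0, 1)‖ ≤ φ₁ := fun t u => by
    simpa only [norm_neg] using hd2 _
  have hfc' : Continuous (fderiv ℝ f) := hf.continuous_fderiv one_ne_zero
  rw [hFxy]
  refine ⟨_, hasDerivAt_intervalIntegral_of_hasDerivAt_bounds (fun t => by fun_prop)
    (by fun_prop) (fun t u => hasDerivAt_apply_mk_sub hf u t) hderiv_le (hx.comp_const_add a₂ s)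
    (hy.comp_const_add b₂ s), ?_⟩
  refine (norm_smul_sub_smul_add_integral_le hx' hy' (fun u => hb (u, u - s)) (hderiv_le s)).trans ?_
  gcongr
  exacts [(norm_nonneg _).trans (hd2 0), hlen s]

theorem stmt4 (f : ℝ × ℝ → ℂ) (hf : ContDiff ℝ 1 f) (φ₀ φ₁ : ℝ)
    (hb : ∀ p, ‖f p‖ ≤ φ₀)
    (hd1 : ∀ p, ‖fderiv ℝ f p (1, 0)‖ ≤ φ₁) (hd2 : ∀ p, ‖fderiv ℝ f p (0, 1)‖ ≤ φ₁)
    (a₁ b₁ a₂ b₂ : ℝ) (h1 : a₁ ≤ b₁) (h2 : a₂ ≤ b₂)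
    (F : ℝ → ℂ)
    (hF : ∀ s, F s = ∫ s' in a₂..b₂,
        f (s + s', s') * Set.indicator (Set.Icc a₁ b₁) 1 (s' + s)) :
    Continuous F ∧ (∀ s, ‖F s‖ ≤ φ₀ * (b₂ - a₂)) ∧
    ∀ s, s ∉ ({a₁ - a₂, a₁ - b₂, b₁ - a₂, b₁ - b₂} : Set ℝ) →
      ∃ F's, HasDerivAt F F's s ∧ ‖F's‖ ≤ φ₁ * (b₂ - a₂) + 2 * φ₀ :=
  stmt4_general f hf φ₀ φ₁ hb hd2 a₁ b₁ a₂ b₂ h2 F hF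
end

section
/- Suppose Γ: [0, T] → [0, ∞) is integrable, bounded, and for all τ ∈ [0, T) and all sufficiently small ε > 0 satisfies Γ(τ + ε) ≤ Γ(τ) + ε·c·Γ̄(τ) + C₁ε², where Γ̄(τ) = sup_{τ' ≤ τ} Γ(τ'). If additionally Γ satisfies the one-sided perturbation bound Γ(τ) ≤ Γ(τ') + C₂(τ − τ') for τ' ≤ τ, then Γ(τ) ≤ Γ(0) + c ∫₀^τ Γ̄(τ') dτ' for all τ ∈ [0, T]. -/
/-!
Put `F t = Γ t - c * ∫₀ᵗ Γ̄`. The perturbation bound passes to the running supremum as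
`Γ̄ y ≤ Γ̄ s + |C₂| (y - s)`, so `c ∫ₛˣ Γ̄ = (x - s) c Γ̄ s + O((x - s)²)` and the step inequality
becomes `F x ≤ F s + K (x - s)²` for `x` slightly to the right of `s`. Together with boundedness the
perturbation bound also gives `F s ≤ F t + L (s - t)` for `t ≤ s`. Such a function is
nonincreasing: after tilting it by `δ (t - a)` the quadratic error disappears near each point, a
continuous induction along the supremum of the good set reaches the right end (the bound from the
left carries the inequality through the supremum), and `δ → 0`. Hence `F τ ≤ F 0 = Γ 0`.
The admissible step size in the step inequality depends on the point, which is why the induction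
is continuous rather than over a uniform partition.
-/

open MeasureTheory Set Filter Topology

theorem le_of_forall_eventually_le_nhdsGT {G : ℝ → ℝ} {a b L : ℝ}
    (hleft : ∀ t s, a ≤ t → t ≤ s → s ≤ b → G s ≤ G t + L * (s - t))
    (hright : ∀ s ∈ Ico a b, ∀ᶠ x in 𝓝[>] s, G x ≤ G s) :
    ∀ x ∈ Icc a b, G x ≤ G a := by
  intro x hx
  set S := {z ∈ Icc a b | ∀ y ∈ Icc a z, G y ≤ G a}
  have haS : a ∈ S :=
    ⟨⟨le_rfl, hx.1.trans hx.2⟩, fun y hy => by rw [le_antisymm hy.2 hy.1]⟩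
  have hSbdd : BddAbove S := ⟨b, fun z hz => hz.1.2⟩
  set s := sSup S
  have has : a ≤ s := le_csSup hSbdd haS
  have hsb : s ≤ b := csSup_le ⟨a, haS⟩ fun z hz => hz.1.2
  have below_s : ∀ y ∈ Ico a s, G y ≤ G a := fun y hy =>
    let ⟨z, hzS, hyz⟩ := exists_lt_of_lt_csSup ⟨a, haS⟩ hy.2
    hzS.2 y ⟨hy.1, hyz.le⟩
  have at_s : G s ≤ G a := by
    rcases has.eq_or_lt with h | h
    · rw [← h]
    have hlim : Tendsto (fun y => G a + L * (s - y)) (𝓝[<] s) (𝓝 (G a)) := by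
      have : Continuous fun y => G a + L * (s - y) := by fun_prop
      simpa using (this.tendsto s).mono_left nhdsWithin_le_nhds
    refine ge_of_tendsto hlim ?_
    filter_upwards [Ioo_mem_nhdsLT h] with y hy
    linarith [hleft y s hy.1.le hy.2.le hsb, below_s y ⟨hy.1.le, hy.2⟩]
  have hsS : s ∈ S := ⟨⟨has, hsb⟩, fun y hy =>
    hy.2.eq_or_lt.elim (fun h => h ▸ at_s) fun h => below_s y ⟨hy.1, h⟩⟩
  have hs_eq : s = b := by
    by_contra hne
    have hsb' : s < b := hsb.lt_of_ne hne
    obtain ⟨u, hsu, hu⟩ := mem_nhdsGT_iff_exists_Ioo_subset.1 (hright s ⟨has, hsb'⟩)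
    set z := min ((s + u) / 2) b
    have hsz : s < z := lt_min (by linarith [mem_Ioi.1 hsu]) hsb'
    have hzS : z ∈ S := by
      refine ⟨⟨has.trans hsz.le, min_le_right _ _⟩, fun y hy => ?_⟩
      rcases le_or_gt y s with hys | hys
      · exact hsS.2 y ⟨hy.1, hys⟩
      · have hyu : y < u :=
          hy.2.trans_lt <| (min_le_left _ _).trans_lt (by linarith [mem_Ioi.1 hsu])
        exact (hu ⟨hys, hyu⟩).trans at_s
    exact (le_csSup hSbdd hzS).not_gt hsz
  exact hsS.2 x ⟨hx.1, hs_eq ▸ hx.2⟩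

theorem le_of_forall_eventually_le_add_sq_nhdsGT {G : ℝ → ℝ} {a b L K : ℝ}
    (hleft : ∀ t s, a ≤ t → t ≤ s → s ≤ b → G s ≤ G t + L * (s - t))
    (hright : ∀ s ∈ Ico a b, ∀ᶠ x in 𝓝[>] s, G x ≤ G s + K * (x - s) ^ 2) :
    ∀ x ∈ Icc a b, G x ≤ G a := by
  intro x hx
  have tilted : ∀ δ > 0, G x - δ * (x - a) ≤ G a := by
    intro δ hδ
    have key := le_of_forall_eventually_le_nhdsGT (G := fun x => G x - δ * (x - a)) (L := L)
      (fun t s ht hts hsb => by nlinarith [hleft t s ht hts hsb]) (fun s hs => ?_) x hx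
    · simpa using key
    have hK : Tendsto (fun x => K * (x - s)) (𝓝[>] s) (𝓝 0) := by
      have : Continuous fun x => K * (x - s) := by fun_prop
      simpa using (this.tendsto s).mono_left nhdsWithin_le_nhds
    filter_upwards [hright s hs, hK.eventually (gt_mem_nhds hδ), self_mem_nhdsWithin]
      with y hy hKy (hsy : s < y)
    nlinarith
  have hlim : Tendsto (fun δ => G a + δ * (x - a)) (𝓝[>] 0) (𝓝 (G a)) := by
    have : Continuous fun δ => G a + δ * (x - a) := by fun_prop
    simpa using (this.tendsto 0).mono_left nhdsWithin_le_nhds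
  refine ge_of_tendsto hlim ?_
  filter_upwards [self_mem_nhdsWithin] with δ hδ
  linarith [tilted δ hδ]

noncomputable def runningSup (f : ℝ → ℝ) (τ : ℝ) : ℝ := sSup (f '' Icc 0 τ)

section RunningSup

variable {f : ℝ → ℝ} {T M C : ℝ}

theorem le_runningSup (hbd : ∀ τ ∈ Icc 0 T, f τ ≤ M) {σ x : ℝ} (hσ : σ ≤ T)
    (hx : x ∈ Icc 0 σ) : f x ≤ runningSup f σ :=
  le_csSup ⟨M, by rintro _ ⟨y, hy, rfl⟩; exact hbd y ⟨hy.1, hy.2.trans hσ⟩⟩ ⟨x, hx, rfl⟩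

theorem runningSup_le {σ B : ℝ} (hσ : 0 ≤ σ) (hB : ∀ x ∈ Icc 0 σ, f x ≤ B) :
    runningSup f σ ≤ B :=
  csSup_le ⟨f 0, 0, ⟨le_rfl, hσ⟩, rfl⟩ (by rintro _ ⟨x, hx, rfl⟩; exact hB x hx)

theorem monotoneOn_runningSup (hbd : ∀ τ ∈ Icc 0 T, f τ ≤ M) :
    MonotoneOn (runningSup f) (Icc 0 T) := fun _ ha _ hb hab =>
  runningSup_le ha.1 fun _ hx => le_runningSup hbd hb.2 ⟨hx.1, hx.2.trans hab⟩

theorem intervalIntegrable_runningSup (hbd : ∀ τ ∈ Icc 0 T, f τ ≤ M) {a b : ℝ}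
    (ha : a ∈ Icc 0 T) (hb : b ∈ Icc 0 T) : IntervalIntegrable (runningSup f) volume a b :=
  ((monotoneOn_runningSup hbd).mono (uIcc_subset_Icc ha hb)).intervalIntegrable

theorem abs_runningSup_le (hnn : ∀ τ ∈ Icc 0 T, 0 ≤ f τ) (hbd : ∀ τ ∈ Icc 0 T, f τ ≤ M)
    {σ : ℝ} (hσ : σ ∈ Icc 0 T) : |runningSup f σ| ≤ M :=
  abs_le.2 ⟨by linarith [hnn σ hσ, hbd σ hσ, le_runningSup hbd hσ.2 ⟨hσ.1, le_rfl⟩],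
    runningSup_le hσ.1 fun x hx => hbd x ⟨hx.1, hx.2.trans hσ.2⟩⟩

theorem runningSup_le_add (hbd : ∀ τ ∈ Icc 0 T, f τ ≤ M)
    (hpert : ∀ t s, 0 ≤ t → t ≤ s → s ≤ T → f s ≤ f t + C * (s - t))
    {s y : ℝ} (hs : 0 ≤ s) (hsy : s ≤ y) (hy : y ≤ T) :
    runningSup f y ≤ runningSup f s + |C| * (y - s) := by
  refine runningSup_le (hs.trans hsy) fun x hx => ?_
  rcases le_or_gt x s with hxs | hsx
  · linarith [le_runningSup hbd (hsy.trans hy) ⟨hx.1, hxs⟩,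
      mul_nonneg (abs_nonneg C) (sub_nonneg.2 hsy)]
  · have hCx : C * (x - s) ≤ |C| * (y - s) :=
      (mul_le_mul_of_nonneg_right (le_abs_self C) (by linarith)).trans
        (mul_le_mul_of_nonneg_left (by linarith [hx.2]) (abs_nonneg C))
    linarith [hpert s x hs hsx.le (hx.2.trans hy), le_runningSup hbd (hsy.trans hy) ⟨hs, le_rfl⟩]

theorem abs_integral_runningSup_le (hnn : ∀ τ ∈ Icc 0 T, 0 ≤ f τ)
    (hbd : ∀ τ ∈ Icc 0 T, f τ ≤ M) {t s : ℝ} (ht : 0 ≤ t) (hts : t ≤ s) (hs : s ≤ T) :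
    |∫ y in t..s, runningSup f y| ≤ M * (s - t) := by
  have := intervalIntegral.norm_integral_le_of_norm_le_const (a := t) (b := s)
    (f := runningSup f) (C := M) fun y hy => by
      rw [uIoc_of_le hts] at hy
      exact abs_runningSup_le hnn hbd ⟨ht.trans hy.1.le, hy.2.trans hs⟩
  rwa [abs_of_nonneg (sub_nonneg.2 hts)] at this

theorem abs_integral_runningSup_sub_le (hbd : ∀ τ ∈ Icc 0 T, f τ ≤ M)
    (hpert : ∀ t s, 0 ≤ t → t ≤ s → s ≤ T → f s ≤ f t + C * (s - t))
    {s x : ℝ} (hs : 0 ≤ s) (hsx : s ≤ x) (hx : x ≤ T) :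
    |(∫ y in s..x, runningSup f y) - (x - s) * runningSup f s| ≤ |C| * (x - s) ^ 2 := by
  have hint := intervalIntegrable_runningSup hbd ⟨hs, hsx.trans hx⟩ ⟨hs.trans hsx, hx⟩
  have hdiff : ∀ y ∈ uIoc s x, ‖runningSup f y - runningSup f s‖ ≤ |C| * (x - s) := by
    intro y hy
    rw [uIoc_of_le hsx] at hy
    have hmono := monotoneOn_runningSup hbd ⟨hs, hsx.trans hx⟩
      ⟨hs.trans hy.1.le, hy.2.trans hx⟩ hy.1.le
    have hlip := runningSup_le_add hbd hpert hs hy.1.le (hy.2.trans hx)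
    have : |C| * (y - s) ≤ |C| * (x - s) :=
      mul_le_mul_of_nonneg_left (by linarith [hy.2]) (abs_nonneg C)
    rw [Real.norm_eq_abs, abs_le]
    constructor <;> nlinarith [abs_nonneg C]
  have := intervalIntegral.norm_integral_le_of_norm_le_const hdiff
  rw [intervalIntegral.integral_sub hint intervalIntegrable_const,
    intervalIntegral.integral_const, smul_eq_mul, Real.norm_eq_abs,
    abs_of_nonneg (sub_nonneg.2 hsx)] at this
  linarith

theorem sub_integral_runningSup_le_of_le (hnn : ∀ τ ∈ Icc 0 T, 0 ≤ f τ)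
    (hbd : ∀ τ ∈ Icc 0 T, f τ ≤ M)
    (hpert : ∀ t s, 0 ≤ t → t ≤ s → s ≤ T → f s ≤ f t + C * (s - t))
    (c : ℝ) {t s : ℝ} (ht : 0 ≤ t) (hts : t ≤ s) (hs : s ≤ T) :
    f s - c * ∫ y in 0..s, runningSup f y ≤
      f t - c * (∫ y in 0..t, runningSup f y) + (C + |c| * M) * (s - t) := by
  have hsplit : (∫ y in 0..s, runningSup f y) - (∫ y in 0..t, runningSup f y) =
      ∫ y in t..s, runningSup f y :=
    intervalIntegral.integral_interval_sub_left
      (intervalIntegrable_runningSup hbd ⟨le_rfl, ht.trans (hts.trans hs)⟩ ⟨ht.trans hts, hs⟩)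
      (intervalIntegrable_runningSup hbd ⟨le_rfl, ht.trans (hts.trans hs)⟩ ⟨ht, hts.trans hs⟩)
  have hc : -(c * ∫ y in t..s, runningSup f y) ≤ |c| * (M * (s - t)) := by
    refine (neg_le_abs _).trans ?_
    rw [abs_mul]
    exact mul_le_mul_of_nonneg_left (abs_integral_runningSup_le hnn hbd ht hts hs) (abs_nonneg c)
  have hmul : c * (∫ y in 0..s, runningSup f y) =
      c * (∫ y in 0..t, runningSup f y) + c * ∫ y in t..s, runningSup f y := by
    rw [← hsplit]; ring
  linarith [hpert t s ht hts hs]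

theorem eventually_sub_integral_runningSup_le (hbd : ∀ τ ∈ Icc 0 T, f τ ≤ M)
    (hpert : ∀ t s, 0 ≤ t → t ≤ s → s ≤ T → f s ≤ f t + C * (s - t)) {c C₁ s : ℝ}
    (hs : s ∈ Ico 0 T)
    (hstep : ∃ ε₀ > 0, ∀ ε, 0 < ε → ε < ε₀ → s + ε ≤ T →
      f (s + ε) ≤ f s + ε * c * runningSup f s + C₁ * ε ^ 2) :
    ∀ᶠ x in 𝓝[>] s, f x - c * ∫ y in 0..x, runningSup f y ≤
      f s - c * (∫ y in 0..s, runningSup f y) + (C₁ + |c| * |C|) * (x - s) ^ 2 := by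
  obtain ⟨ε₀, hε₀, hstep⟩ := hstep
  filter_upwards [Ioo_mem_nhdsGT (lt_min (lt_add_of_pos_right s hε₀) hs.2)] with x hx
  have hsx : s < x := hx.1
  have hxT : x ≤ T := (hx.2.trans_le (min_le_right _ _)).le
  have hf : f x ≤ f s + (x - s) * c * runningSup f s + C₁ * (x - s) ^ 2 := by
    simpa using hstep (x - s) (by linarith) (by linarith [hx.2.trans_le (min_le_left _ _)])
      (by linarith)
  have hsplit : (∫ y in 0..x, runningSup f y) - (∫ y in 0..s, runningSup f y) =
      ∫ y in s..x, runningSup f y :=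
    intervalIntegral.integral_interval_sub_left
      (intervalIntegrable_runningSup hbd ⟨le_rfl, hs.1.trans hs.2.le⟩ ⟨hs.1.trans hsx.le, hxT⟩)
      (intervalIntegrable_runningSup hbd ⟨le_rfl, hs.1.trans hs.2.le⟩ ⟨hs.1, hs.2.le⟩)
  set D := (∫ y in s..x, runningSup f y) - (x - s) * runningSup f s
  have hc : -(c * D) ≤ |c| * (|C| * (x - s) ^ 2) := by
    refine (neg_le_abs _).trans ?_
    rw [abs_mul]
    exact mul_le_mul_of_nonneg_left
      (abs_integral_runningSup_sub_le hbd hpert hs.1 hsx.le hxT) (abs_nonneg c)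
  have hmul : c * (∫ y in 0..x, runningSup f y) =
      c * (∫ y in 0..s, runningSup f y) + (x - s) * c * runningSup f s + c * D := by
    rw [show (∫ y in 0..x, runningSup f y) = _ from (sub_eq_iff_eq_add.1 hsplit)]
    ring
  linarith

end RunningSup

theorem stmt11_general (T c C₁ C₂ : ℝ) (Γ : ℝ → ℝ)
    (hnn : ∀ τ ∈ Set.Icc 0 T, 0 ≤ Γ τ)
    (M : ℝ) (hbd : ∀ τ ∈ Set.Icc 0 T, Γ τ ≤ M)
    (Γbar : ℝ → ℝ) (hΓbar : ∀ τ, Γbar τ = sSup (Γ '' Set.Icc 0 τ))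
    (hstep : ∀ τ ∈ Set.Ico 0 T, ∃ ε₀ > 0, ∀ ε, 0 < ε → ε < ε₀ → τ + ε ≤ T →
      Γ (τ + ε) ≤ Γ τ + ε * c * Γbar τ + C₁ * ε ^ 2)
    (hpert : ∀ τ' τ, 0 ≤ τ' → τ' ≤ τ → τ ≤ T → Γ τ ≤ Γ τ' + C₂ * (τ - τ')) :
    ∀ τ ∈ Set.Icc 0 T, Γ τ ≤ Γ 0 + c * ∫ τ' in (0:ℝ)..τ, Γbar τ' := by
  obtain rfl : Γbar = runningSup Γ := funext hΓbar
  intro τ hτ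
  have key := le_of_forall_eventually_le_add_sq_nhdsGT
    (G := fun t => Γ t - c * ∫ y in 0..t, runningSup Γ y)
    (fun t s ht hts hs => sub_integral_runningSup_le_of_le hnn hbd hpert c ht hts hs)
    (fun s hs => eventually_sub_integral_runningSup_le hbd hpert hs (hstep s hs)) τ hτ
  simp only [intervalIntegral.integral_same, mul_zero, sub_zero] at key
  linarith

theorem stmt11 (T c C₁ C₂ : ℝ) (hT : 0 ≤ T) (Γ : ℝ → ℝ)
    (hint : IntegrableOn Γ (Set.Icc 0 T))
    (hnn : ∀ τ ∈ Set.Icc 0 T, 0 ≤ Γ τ)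
    (M : ℝ) (hbd : ∀ τ ∈ Set.Icc 0 T, Γ τ ≤ M)
    (Γbar : ℝ → ℝ) (hΓbar : ∀ τ, Γbar τ = sSup (Γ '' Set.Icc 0 τ))
    (hstep : ∀ τ ∈ Set.Ico 0 T, ∃ ε₀ > 0, ∀ ε, 0 < ε → ε < ε₀ → τ + ε ≤ T →
      Γ (τ + ε) ≤ Γ τ + ε * c * Γbar τ + C₁ * ε ^ 2)
    (hpert : ∀ τ' τ, 0 ≤ τ' → τ' ≤ τ → τ ≤ T → Γ τ ≤ Γ τ' + C₂ * (τ - τ')) :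
    ∀ τ ∈ Set.Icc 0 T, Γ τ ≤ Γ 0 + c * ∫ τ' in (0:ℝ)..τ, Γbar τ' :=
  stmt11_general T c C₁ C₂ Γ hnn M hbd Γbar hΓbar hstep hpert
end
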